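/- Let A ∈ ℂ^{n×n} and H ∈ ℂ^{N×N} with 1 < ‖H‖ < ‖A‖, let β > 1 and c > 0, and let g_0, …, g_{N−1} ∈ ℂ^n satisfy ‖g_ℓ‖ ≤ c ‖A‖^ℓ for 0 ≤ ℓ ≤ N−1; set G = [g_0 … g_{N−1}] ∈ ℂ^{n×N}. Let Q_1 ∈ ℂ^{n×N} and Q_2 ∈ ℂ^{N×N} satisfy Q_1* Q_1 + Q_2* Q_2 = I_N (i.e. the stacked matrix [Q_1; Q_2] has orthonormal columns), and let F ∈ ℂ^{N×N} be such that the Krylov matrix K_N(F,e_1) = [e_1, F e_1, …, F^{N−1} e_1] is invertible and F = Q_1* A Q_1 + Q_2* H Q_2 + β^{−1} Q_1* G K_N(F,e_1)^{−1}. Then for every 0 ≤ ℓ ≤ N, ‖F^ℓ e_1‖ ≤ (1 + β^{−1} c ℓ) ‖A‖^ℓ. -/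

import Mathlib

/-
Put W = [Q₁; Q₂], so that WᴴW = 1 and hence ‖W‖ ≤ 1. Then Q₁ᴴAQ₁ + Q₂ᴴHQ₂ = Wᴴ diag(A, H) W has
norm at most max(‖A‖, ‖H‖) = ‖A‖. Since K_N(F, e₁) maps e_{ℓ+1} to F^ℓ e₁, the last term of F sends
F^ℓ e₁ to β⁻¹ Q₁ᴴ g_ℓ, of norm at most β⁻¹ c ‖A‖^ℓ. So x_ℓ = ‖F^ℓ e₁‖ satisfies
x_{ℓ+1} ≤ ‖A‖ x_ℓ + β⁻¹ c ‖A‖^ℓ, and induction using ‖A‖ ≥ 1 gives the bound.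
-/

open scoped Matrix.Norms.L2Operator
open Matrix

/-- The first standard basis vector of `ℂ^N`. -/
noncomputable def e1C (N : ℕ) : Fin N → ℂ := fun j => if (j : ℕ) = 0 then 1 else 0

/-- The Krylov matrix `K_N(F, e₁) = [e₁, F e₁, …, F^(N-1) e₁]`. -/
noncomputable def krylovC {N : ℕ} (F : Matrix (Fin N) (Fin N) ℂ) : Matrix (Fin N) (Fin N) ℂ :=
  fun i j => (F ^ (j : ℕ)).mulVec (e1C N) i

/-- The Euclidean norm of a vector in `ℂ^n`. -/
noncomputable def cnorm {n : ℕ} (v : Fin n → ℂ) : ℝ :=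
  ‖(WithLp.equiv 2 (Fin n → ℂ)).symm v‖

open WithLp

namespace Matrix
variable {𝕜 : Type*} [RCLike 𝕜] {l m n p : Type*}

section
variable [Fintype l] [Fintype m]

lemma conjTranspose_fromRows_mul_fromRows (Q₁ : Matrix m n 𝕜) (Q₂ : Matrix l n 𝕜) :
    (fromRows Q₁ Q₂)ᴴ * fromRows Q₁ Q₂ = Q₁ᴴ * Q₁ + Q₂ᴴ * Q₂ := by
  rw [conjTranspose_fromRows_eq_fromCols_conjTranspose, fromCols_mul_fromRows]

lemma conjTranspose_fromRows_mul_fromBlocks_mul_fromRows (Q₁ : Matrix m n 𝕜)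
    (Q₂ : Matrix l n 𝕜) (A : Matrix m m 𝕜) (H : Matrix l l 𝕜) :
    (fromRows Q₁ Q₂)ᴴ * fromBlocks A 0 0 H * fromRows Q₁ Q₂ = Q₁ᴴ * A * Q₁ + Q₂ᴴ * H * Q₂ := by
  rw [conjTranspose_fromRows_eq_fromCols_conjTranspose, fromCols_mul_fromBlocks,
    fromCols_mul_fromRows]
  simp [Matrix.mul_assoc]

end

variable [Fintype l] [Fintype m] [Fintype n] [Fintype p]

lemma norm_toLp_sumElim_sq (u : m → 𝕜) (v : n → 𝕜) :
    ‖toLp 2 (Sum.elim u v)‖ ^ 2 = ‖toLp 2 u‖ ^ 2 + ‖toLp 2 v‖ ^ 2 := by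
  simp [EuclideanSpace.norm_sq_eq, Fintype.sum_sum_type]

lemma norm_toLp_mulVec_le [DecidableEq n] (A : Matrix m n 𝕜) (x : n → 𝕜) :
    ‖toLp 2 (A *ᵥ x)‖ ≤ ‖A‖ * ‖toLp 2 x‖ :=
  A.l2_opNorm_mulVec (toLp 2 x)

lemma l2_opNorm_le_of_mulVec_le [DecidableEq n] {A : Matrix m n 𝕜} {C : ℝ} (hC : 0 ≤ C)
    (h : ∀ x : n → 𝕜, ‖toLp 2 (A *ᵥ x)‖ ≤ C * ‖toLp 2 x‖) : ‖A‖ ≤ C := by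
  rw [l2_opNorm_def]
  exact ContinuousLinearMap.opNorm_le_bound _ hC fun x => by
    simpa [toLpLin_apply] using h (ofLp x)

lemma l2_opNorm_one_le [DecidableEq n] : ‖(1 : Matrix n n 𝕜)‖ ≤ 1 :=
  l2_opNorm_le_of_mulVec_le zero_le_one fun x => by simp

lemma l2_opNorm_le_one_of_conjTranspose_mul_self_eq_one [DecidableEq n] {W : Matrix m n 𝕜}
    (hW : Wᴴ * W = 1) : ‖W‖ ≤ 1 := by
  have h : ‖W‖ * ‖W‖ ≤ 1 := by
    rw [← l2_opNorm_conjTranspose_mul_self, hW]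
    exact l2_opNorm_one_le
  nlinarith [norm_nonneg W]

lemma l2_opNorm_le_fromRows_left [DecidableEq n] (A : Matrix m n 𝕜) (B : Matrix l n 𝕜) :
    ‖A‖ ≤ ‖fromRows A B‖ := by
  refine l2_opNorm_le_of_mulVec_le (norm_nonneg _) fun x => ?_
  refine le_trans ?_ (norm_toLp_mulVec_le (fromRows A B) x)
  refine (sq_le_sq₀ (norm_nonneg _) (norm_nonneg _)).mp ?_
  rw [fromRows_mulVec, norm_toLp_sumElim_sq]
  exact le_add_of_nonneg_right (sq_nonneg _)

lemma l2_opNorm_fromBlocks_zero_le [DecidableEq n] [DecidableEq p] (A : Matrix m n 𝕜)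
    (D : Matrix l p 𝕜) : ‖fromBlocks A 0 0 D‖ ≤ max ‖A‖ ‖D‖ := by
  refine l2_opNorm_le_of_mulVec_le (le_max_of_le_left (norm_nonneg _)) fun x => ?_
  obtain ⟨u, v, rfl⟩ : ∃ u v, x = Sum.elim u v := ⟨_, _, (Sum.elim_comp_inl_inr x).symm⟩
  have hA := (norm_toLp_mulVec_le A u).trans
    (mul_le_mul_of_nonneg_right (le_max_left ‖A‖ ‖D‖) (norm_nonneg _))
  have hD := (norm_toLp_mulVec_le D v).trans
    (mul_le_mul_of_nonneg_right (le_max_right ‖A‖ ‖D‖) (norm_nonneg _))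
  refine (sq_le_sq₀ (norm_nonneg _) (by positivity)).mp ?_
  simp only [fromBlocks_mulVec, Sum.elim_comp_inl, Sum.elim_comp_inr, zero_mulVec, add_zero,
    zero_add]
  rw [norm_toLp_sumElim_sq, mul_pow, norm_toLp_sumElim_sq, mul_add, ← mul_pow, ← mul_pow]
  gcongr

lemma l2_opNorm_conjTranspose_mul_mul_le [DecidableEq m] [DecidableEq n] {W : Matrix m n 𝕜}
    (hW : Wᴴ * W = 1) (D : Matrix m m 𝕜) : ‖Wᴴ * D * W‖ ≤ ‖D‖ := by
  have h1 := l2_opNorm_le_one_of_conjTranspose_mul_self_eq_one hW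
  calc ‖Wᴴ * D * W‖ ≤ ‖Wᴴ‖ * ‖D‖ * ‖W‖ :=
        (l2_opNorm_mul _ _).trans (mul_le_mul_of_nonneg_right (l2_opNorm_mul _ _) (norm_nonneg _))
    _ ≤ 1 * ‖D‖ * 1 := by rw [l2_opNorm_conjTranspose]; gcongr
    _ = ‖D‖ := by ring

variable [DecidableEq n] {Q₁ : Matrix m n 𝕜} {Q₂ : Matrix l n 𝕜}

lemma l2_opNorm_le_one_of_conjTranspose_mul_add_eq_one (hQ : Q₁ᴴ * Q₁ + Q₂ᴴ * Q₂ = 1) :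
    ‖Q₁‖ ≤ 1 :=
  (l2_opNorm_le_fromRows_left Q₁ Q₂).trans <| l2_opNorm_le_one_of_conjTranspose_mul_self_eq_one <|
    (conjTranspose_fromRows_mul_fromRows Q₁ Q₂).trans hQ

lemma l2_opNorm_compression_le [DecidableEq m] [DecidableEq l]
    (hQ : Q₁ᴴ * Q₁ + Q₂ᴴ * Q₂ = 1) (A : Matrix m m 𝕜) (H : Matrix l l 𝕜) :
    ‖Q₁ᴴ * A * Q₁ + Q₂ᴴ * H * Q₂‖ ≤ max ‖A‖ ‖H‖ := by
  rw [← conjTranspose_fromRows_mul_fromBlocks_mul_fromRows]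
  exact (l2_opNorm_conjTranspose_mul_mul_le ((conjTranspose_fromRows_mul_fromRows Q₁ Q₂).trans hQ)
    _).trans (l2_opNorm_fromBlocks_zero_le A H)

end Matrix

lemma cnorm_e1C_le_one (N : ℕ) : cnorm (e1C N) ≤ 1 := by
  cases N with
  | zero => simp [cnorm, EuclideanSpace.norm_eq]
  | succ k =>
    have : e1C (k + 1) = Pi.single 0 1 := by
      funext j
      simp only [e1C, Pi.single_apply, Fin.val_eq_zero_iff]
    simp [cnorm, this]

lemma krylovC_inv_mulVec_pow {N : ℕ} {F : Matrix (Fin N) (Fin N) ℂ} (hK : IsUnit (krylovC F))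
    (l : Fin N) : (krylovC F)⁻¹ *ᵥ (F ^ (l : ℕ) *ᵥ e1C N) = Pi.single l 1 := by
  have hcol : F ^ (l : ℕ) *ᵥ e1C N = krylovC F *ᵥ Pi.single l 1 := by
    rw [mulVec_single_one]; rfl
  rw [hcol, mulVec_mulVec, nonsing_inv_mul _ ((isUnit_iff_isUnit_det _).mp hK), one_mulVec]

lemma le_one_add_mul_mul_pow_of_le {N : ℕ} {u : ℕ → ℝ} {a d : ℝ} (ha : 1 ≤ a) (hd : 0 ≤ d)
    (h0 : u 0 ≤ 1) (hstep : ∀ l < N, u (l + 1) ≤ a * u l + d * a ^ l) :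
    ∀ l ≤ N, u l ≤ (1 + d * l) * a ^ l := by
  intro l hl
  induction l with
  | zero => simpa using h0
  | succ l ih =>
    have ha0 : 0 ≤ a := zero_le_one.trans ha
    calc u (l + 1) ≤ a * u l + d * a ^ l := hstep l hl
      _ ≤ a * ((1 + d * l) * a ^ l) + d * a ^ (l + 1) := by
          gcongr
          exacts [ih (by omega), l.le_succ]
      _ = (1 + d * ↑(l + 1)) * a ^ (l + 1) := by push_cast; ring

/-- Growth bound for the Krylov powers: if `1 < ‖H‖ < ‖A‖`, `β > 1`, `c > 0`, the columns
`g_ℓ` of `G` satisfy `‖g_ℓ‖ ≤ c ‖A‖^ℓ`, `[Q₁; Q₂]` has orthonormal columns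
(`Q₁* Q₁ + Q₂* Q₂ = I`), the Krylov matrix `K_N(F, e₁)` is invertible and
`F = Q₁* A Q₁ + Q₂* H Q₂ + β⁻¹ Q₁* G K_N(F, e₁)⁻¹`, then
`‖F^ℓ e₁‖ ≤ (1 + β⁻¹ c ℓ) ‖A‖^ℓ` for all `0 ≤ ℓ ≤ N`. -/
theorem hessenberg_power_bound (n N : ℕ)
    (A : Matrix (Fin n) (Fin n) ℂ) (H : Matrix (Fin N) (Fin N) ℂ)
    (hH1 : 1 < ‖H‖) (hHA : ‖H‖ < ‖A‖)
    (β c : ℝ) (hβ : 1 < β) (hc : 0 < c)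
    (G : Matrix (Fin n) (Fin N) ℂ)
    (hG : ∀ l : Fin N, cnorm (fun i => G i l) ≤ c * ‖A‖ ^ (l : ℕ))
    (Q1 : Matrix (Fin n) (Fin N) ℂ) (Q2 : Matrix (Fin N) (Fin N) ℂ)
    (hQ : Q1ᴴ * Q1 + Q2ᴴ * Q2 = 1)
    (F : Matrix (Fin N) (Fin N) ℂ) (hK : IsUnit (krylovC F))
    (hF : F = Q1ᴴ * A * Q1 + Q2ᴴ * H * Q2 + β⁻¹ • (Q1ᴴ * G * (krylovC F)⁻¹)) :
    ∀ l : ℕ, l ≤ N →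
      cnorm ((F ^ l).mulVec (e1C N)) ≤ (1 + β⁻¹ * c * l) * ‖A‖ ^ l := by
  have hβ0 : 0 < β⁻¹ := inv_pos.mpr (zero_lt_one.trans hβ)
  have hM : ‖Q1ᴴ * A * Q1 + Q2ᴴ * H * Q2‖ ≤ ‖A‖ :=
    (l2_opNorm_compression_le hQ A H).trans (max_le le_rfl hHA.le)
  have hQ1 : ‖Q1ᴴ‖ ≤ 1 := (l2_opNorm_conjTranspose Q1).trans_le
    (l2_opNorm_le_one_of_conjTranspose_mul_add_eq_one hQ)
  refine le_one_add_mul_mul_pow_of_le (hH1.trans hHA).le (by positivity)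
    (by simpa using cnorm_e1C_le_one N) fun l hl => ?_
  set x := F ^ l *ᵥ e1C N
  set M := Q1ᴴ * A * Q1 + Q2ᴴ * H * Q2
  have hx : F ^ (l + 1) *ᵥ e1C N = M *ᵥ x + β⁻¹ • (Q1ᴴ *ᵥ G.col ⟨l, hl⟩) := by
    rw [pow_succ', ← mulVec_mulVec, congrArg (· *ᵥ x) hF, add_mulVec, smul_mulVec,
      ← mulVec_mulVec, ← mulVec_mulVec, krylovC_inv_mulVec_pow hK ⟨l, hl⟩, mulVec_single_one]
  calc cnorm (F ^ (l + 1) *ᵥ e1C N)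
      ≤ ‖M‖ * cnorm x + β⁻¹ * (‖Q1ᴴ‖ * cnorm (G.col ⟨l, hl⟩)) := by
        rw [hx]
        refine (norm_add_le _ _).trans (add_le_add (norm_toLp_mulVec_le M x) ?_)
        rw [toLp_smul, norm_smul, Real.norm_of_nonneg hβ0.le]
        gcongr
        exact norm_toLp_mulVec_le _ _
    _ ≤ ‖A‖ * cnorm x + β⁻¹ * (1 * (c * ‖A‖ ^ l)) := by
        gcongr
        exacts [norm_nonneg _, norm_nonneg _, hG ⟨l, hl⟩]
    _ = ‖A‖ * cnorm x + β⁻¹ * c * ‖A‖ ^ l := by ring
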